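/- Suppose φ = g − h is lower bounded, let γ > 0, 0 < λ < 2, and let the sequences be generated by u^k = prox_{γh}(s^k), v^k = prox_{γg}(s^k), s^{k+1} = s^k + λ(v^k − u^k) from any s^0 ∈ ℝ^p. Then the sequences (u^k) and (v^k) have the same set of cluster points Ω. Moreover, if (s^k) is bounded, then the sequence (φ_γ(s^k)) converges monotonically to a finite limit φ⋆, every u⋆ ∈ Ω is a stationary point of φ (i.e., ∂g(u⋆) ∩ ∂h(u⋆) ≠ ∅), and φ(u⋆) = φ⋆ for every u⋆ ∈ Ω. -/

import Mathlib

open scoped InnerProductSpace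
noncomputable section

/-- `ℝ^p` as a Euclidean space. -/
abbrev Euc (p : ℕ) := EuclideanSpace ℝ (Fin p)

variable {p : ℕ}

/-- `f : ℝ^p → ℝ ∪ {∞}` (modelled with `EReal` values never equal to `-∞`) is proper. -/
def ProperFun (f : Euc p → EReal) : Prop :=
  (∀ x, f x ≠ ⊥) ∧ (∃ x, f x ≠ ⊤)

/-- Convexity for extended-real-valued functions. -/
def ConvexFun (f : Euc p → EReal) : Prop :=
  ∀ x y : Euc p, ∀ t : ℝ, 0 ≤ t → t ≤ 1 →
    f (t • x + (1 - t) • y) ≤ (t : EReal) * f x + ((1 - t : ℝ) : EReal) * f y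

/-- The convex subdifferential `∂f(x)`. -/
def Subdiff (f : Euc p → EReal) (x : Euc p) : Set (Euc p) :=
  {v | ∀ z, f x + ((⟪v, z - x⟫_ℝ : ℝ) : EReal) ≤ f z}

/-- `u` minimizes `w ↦ f(w) + (1/(2γ))‖w − x‖²`. -/
def ProxObjMin (f : Euc p → EReal) (γ : ℝ) (x u : Euc p) : Prop :=
  ∀ w, f u + ((1/(2*γ) * ‖u - x‖^2 : ℝ) : EReal) ≤ f w + ((1/(2*γ) * ‖w - x‖^2 : ℝ) : EReal)

/-- `u = prox_{γf}(x)`: `u` is the unique minimizer of `w ↦ f(w) + (1/(2γ))‖w − x‖²`. -/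
def IsProxOf (f : Euc p → EReal) (γ : ℝ) (x u : Euc p) : Prop :=
  ProxObjMin f γ x u ∧ ∀ w, ProxObjMin f γ x w → w = u

/-- The Moreau envelope `f^γ(x) = inf_w { f(w) + (1/(2γ))‖w − x‖² }`, as an extended real. -/
def moreau (f : Euc p → EReal) (γ : ℝ) (x : Euc p) : EReal :=
  ⨅ w : Euc p, f w + ((1/(2*γ) * ‖w - x‖^2 : ℝ) : EReal)

/-- The (real-valued) Moreau envelope. -/
def moreauR (f : Euc p → EReal) (γ : ℝ) (x : Euc p) : ℝ := (moreau f γ x).toReal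

/-- The DC envelope `φ_γ = g^γ − h^γ`. -/
def dce (g h : Euc p → EReal) (γ : ℝ) (s : Euc p) : ℝ := moreauR g γ s - moreauR h γ s

/-- The DC function `φ = g − h`, with the convention `∞ − ∞ = ∞`. -/
def dcVal (g h : Euc p → EReal) (x : Euc p) : EReal :=
  if g x = ⊤ then ⊤ else g x - h x

/-!
For proper convex lsc `f`, the infimum defining `f^γ(s)` is attained at `prox_{γf}(s)`, and
`γ⁻¹ (s - prox_{γf}(s))` is a subgradient of `f` there, so `f^γ` lies above its tangent at `s`.
Bounding `g^γ(s^{k+1})` from above by the old point `v^k`, and `h^γ(s^{k+1})` from below by this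
tangent, gives the sufficient decrease
`φ_γ(s^{k+1}) + λ(2-λ)/(2γ) ‖v^k - u^k‖² ≤ φ_γ(s^k)`.
Since `φ_γ ≥ inf φ`, the values converge and `v^k - u^k → 0`, so `(u^k)` and `(v^k)` have the same
cluster points. Along a subsequence on which `s^k` and `u^k` converge, lower semicontinuity closes
the graphs of `∂g` and `∂h`, so the common subgradient `γ⁻¹ (s⋆ - u⋆)` survives in the limit, and
the subgradient inequality at `u⋆` forces `g(v^k) → g(u⋆)` and `h(u^k) → h(u⋆)`.
-/

open Filter Topology

theorem MapClusterPt.of_tendsto_sub {α E : Type*} [TopologicalSpace E] [AddGroup E]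
    [IsTopologicalAddGroup E] {F : Filter α} {a b : α → E} {x : E}
    (hx : MapClusterPt x F a) (hab : Tendsto (fun k => b k - a k) F (𝓝 0)) :
    MapClusterPt x F b := by
  obtain ⟨U, hUF, hU⟩ := mapClusterPt_iff_ultrafilter.1 hx
  refine mapClusterPt_iff_ultrafilter.2 ⟨U, hUF, ?_⟩
  simpa only [zero_add, sub_add_cancel] using (hab.mono_left hUF).add hU

theorem LowerSemicontinuous.le_of_tendsto {X ι α : Type*} [TopologicalSpace X] [LinearOrder α]
    [DenselyOrdered α] [TopologicalSpace α] [OrderTopology α] {f : X → α}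
    (hf : LowerSemicontinuous f) {l : Filter ι} [l.NeBot] {y : ι → X} {b : ι → α} {x : X} {B : α}
    (hy : Tendsto y l (𝓝 x)) (hb : Tendsto b l (𝓝 B)) (hle : ∀ᶠ j in l, f (y j) ≤ b j) :
    f x ≤ B := by
  by_contra! hlt
  obtain ⟨a, hBa, haf⟩ := exists_between hlt
  obtain ⟨j, hfa, hba, hfb⟩ :=
    ((hy.eventually (hf x a haf)).and ((hb.eventually (gt_mem_nhds hBa)).and hle)).exists
  exact (hfa.trans_le hfb).not_gt hba

theorem tendsto_nhds_zero_of_sufficient_decrease {E : Type*} [SeminormedAddGroup E]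
    {D : ℕ → ℝ} {x : ℕ → E} {β L : ℝ} (hβ : 0 < β) (hD : Tendsto D atTop (𝓝 L))
    (hdecr : ∀ k, D (k + 1) + β * ‖x k‖ ^ 2 ≤ D k) : Tendsto x atTop (𝓝 0) := by
  have hgap : Tendsto (fun k => D k - D (k + 1)) atTop (𝓝 0) := by
    simpa using hD.sub (hD.comp (tendsto_add_atTop_nat 1))
  have hsq : Tendsto (fun k => ‖x k‖ ^ 2) atTop (𝓝 0) := by
    refine squeeze_zero (fun k => by positivity) (fun k => ?_) (hgap.div_const β |>.trans (by simp))
    rw [le_div_iff₀ hβ]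
    linarith [hdecr k]
  rw [tendsto_zero_iff_norm_tendsto_zero]
  simpa using hsq.sqrt

theorem EReal.ne_top_of_add_coe_le {a b : EReal} {r : ℝ} (h : a + r ≤ b) (hb : b ≠ ⊤) :
    a ≠ ⊤ := by
  rintro rfl
  rw [EReal.top_add_of_ne_bot (EReal.coe_ne_bot r), top_le_iff] at h
  exact hb h

section Subdifferential

variable {f : Euc p → EReal} {x u ξ : Euc p}

theorem ProperFun.coe_toReal (hf : ProperFun f) (hx : f x ≠ ⊤) : ((f x).toReal : EReal) = f x :=
  EReal.coe_toReal hx (hf.1 x)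

theorem ProperFun.mem_subdiff_iff (hf : ProperFun f) (hu : f u ≠ ⊤) :
    ξ ∈ Subdiff f u ↔ ∀ z, f z ≠ ⊤ → (f u).toReal + ⟪ξ, z - u⟫_ℝ ≤ (f z).toReal := by
  refine forall_congr' fun z => ?_
  by_cases hz : f z = ⊤
  · simp [hz]
  rw [imp_iff_right hz, ← EReal.coe_le_coe_iff, EReal.coe_add, hf.coe_toReal hu, hf.coe_toReal hz]

theorem ProperFun.ne_top_of_mem_subdiff (hf : ProperFun f) (hξ : ξ ∈ Subdiff f u) : f u ≠ ⊤ :=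
  let ⟨z, hz⟩ := hf.2
  EReal.ne_top_of_add_coe_le (hξ z) hz

theorem apply_le_sub_inner_of_mem_subdiff (hξ : ξ ∈ Subdiff f u) (z : Euc p) :
    f u ≤ f z - ⟪ξ, z - u⟫_ℝ :=
  (EReal.le_sub_iff_add_le (.inl (EReal.coe_ne_bot _)) (.inl (EReal.coe_ne_top _))).2 (hξ z)

variable {y w : ℕ → Euc p} {ystar wstar : Euc p}

theorem tendsto_sub_inner (hy : Tendsto y atTop (𝓝 ystar)) (hw : Tendsto w atTop (𝓝 wstar))
    (c : EReal) (z : Euc p) :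
    Tendsto (fun j => c - ⟪w j, z - y j⟫_ℝ) atTop (𝓝 (c - ⟪wstar, z - ystar⟫_ℝ)) := by
  induction c with
  | bot | top => simp
  | coe r =>
    simp_rw [← EReal.coe_sub]
    exact EReal.tendsto_coe.2 (tendsto_const_nhds.sub (hw.inner (tendsto_const_nhds.sub hy)))

theorem mem_subdiff_of_tendsto (hfl : LowerSemicontinuous f) (hy : Tendsto y atTop (𝓝 ystar))
    (hw : Tendsto w atTop (𝓝 wstar)) (hsub : ∀ j, w j ∈ Subdiff f (y j)) :
    wstar ∈ Subdiff f ystar := fun z =>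
  (EReal.le_sub_iff_add_le (.inl (EReal.coe_ne_bot _)) (.inl (EReal.coe_ne_top _))).1 <|
    hfl.le_of_tendsto hy (tendsto_sub_inner hy hw (f z) z)
      (.of_forall fun j => apply_le_sub_inner_of_mem_subdiff (hsub j) z)

theorem tendsto_toReal_apply_of_mem_subdiff (hf : ProperFun f) (hfl : LowerSemicontinuous f)
    (hy : Tendsto y atTop (𝓝 ystar)) (hw : Tendsto w atTop (𝓝 wstar))
    (hsub : ∀ j, w j ∈ Subdiff f (y j)) (hfin : f ystar ≠ ⊤) :
    Tendsto (fun j => (f (y j)).toReal) atTop (𝓝 (f ystar).toReal) := by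
  have hupper : Tendsto (fun j => f ystar - ⟪w j, ystar - y j⟫_ℝ) atTop (𝓝 (f ystar)) := by
    simpa using tendsto_sub_inner hy hw (f ystar) ystar
  have hlim : Tendsto (f ∘ y) atTop (𝓝 (f ystar)) := by
    refine tendsto_order.2 ⟨fun a ha => hy.eventually (hfl ystar a ha), fun a ha => ?_⟩
    filter_upwards [hupper.eventually (gt_mem_nhds ha)] with j hj
    exact (apply_le_sub_inner_of_mem_subdiff (hsub j) ystar).trans_lt hj
  exact (EReal.tendsto_toReal hfin (hf.1 _)).comp hlim

end Subdifferential

section Prox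

variable {f : Euc p → EReal} {γ : ℝ} {x u : Euc p}

theorem ProxObjMin.apply_ne_top (hf : ProperFun f) (hmin : ProxObjMin f γ x u) : f u ≠ ⊤ :=
  let ⟨w, hw⟩ := hf.2
  EReal.ne_top_of_add_coe_le (hmin w) (EReal.add_ne_top hw (EReal.coe_ne_top _))

theorem ProxObjMin.moreau_eq (hmin : ProxObjMin f γ x u) :
    moreau f γ x = f u + ((1/(2*γ) * ‖u - x‖^2 : ℝ) : EReal) :=
  le_antisymm (iInf_le _ u) (le_iInf hmin)

theorem ProxObjMin.coe_moreauR (hf : ProperFun f) (hmin : ProxObjMin f γ x u) :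
    (moreauR f γ x : EReal) = moreau f γ x := by
  rw [moreauR, hmin.moreau_eq, ← hf.coe_toReal (hmin.apply_ne_top hf)]
  rfl

theorem ProxObjMin.moreauR_eq (hf : ProperFun f) (hmin : ProxObjMin f γ x u) :
    moreauR f γ x = (f u).toReal + 1/(2*γ) * ‖u - x‖^2 := by
  rw [moreauR, hmin.moreau_eq, ← hf.coe_toReal (hmin.apply_ne_top hf)]
  rfl

theorem ProxObjMin.smul_sub_mem_subdiff (hf : ProperFun f) (hconv : ConvexFun f) (hγ : 0 < γ)
    (hmin : ProxObjMin f γ x u) : γ⁻¹ • (x - u) ∈ Subdiff f u := by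
  have hu := hmin.apply_ne_top hf
  rw [hf.mem_subdiff_iff hu]
  intro z hz
  set a := (f u).toReal
  set b := (f z).toReal
  -- optimality of `u` against `t • z + (1 - t) • u`, divided by `t`; then let `t → 0⁺`
  have key : ∀ t ∈ Set.Ioc (0 : ℝ) 1,
      a + ⟪γ⁻¹ • (x - u), z - u⟫_ℝ ≤ b + t * (‖z - u‖ ^ 2 / (2 * γ)) := by
    rintro t ⟨ht0, ht1⟩
    have hchain := (hmin (t • z + (1 - t) • u)).trans (add_le_add_left (hconv z u t ht0.le ht1) _)
    rw [← hf.coe_toReal hz, ← hf.coe_toReal hu,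
      show t • z + (1 - t) • u - x = t • (z - u) + (u - x) by module] at hchain
    have hreal : a + 1 / (2 * γ) * ‖u - x‖ ^ 2
        ≤ t * b + (1 - t) * a + 1 / (2 * γ) * ‖t • (z - u) + (u - x)‖ ^ 2 := by
      exact_mod_cast hchain
    rw [norm_add_sq_real, norm_smul, real_inner_smul_left, Real.norm_eq_abs, mul_pow, sq_abs,
      ← neg_sub x u, inner_neg_right] at hreal
    rw [real_inner_smul_left, real_inner_comm]
    field_simp at hreal ⊢
    exact le_of_mul_le_mul_left (by linear_combination hreal) ht0
  have hcont : Continuous fun t : ℝ => b + t * (‖z - u‖ ^ 2 / (2 * γ)) := by fun_prop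
  have hlim := (hcont.tendsto' 0 b (by simp [b])).mono_left (nhdsWithin_le_nhds (s := Set.Ioi 0))
  exact ge_of_tendsto hlim (eventually_of_mem (Ioc_mem_nhdsGT one_pos) key)

theorem ProxObjMin.moreauR_add_inner_le_moreau (hf : ProperFun f) (hγ : 0 < γ)
    (hmin : ProxObjMin f γ x u) (hsub : γ⁻¹ • (x - u) ∈ Subdiff f u) (y : Euc p) :
    ((moreauR f γ x + ⟪γ⁻¹ • (x - u), y - x⟫_ℝ : ℝ) : EReal) ≤ moreau f γ y := by
  refine le_iInf fun w => ?_
  by_cases hw : f w = ⊤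
  · rw [hw, EReal.top_add_of_ne_bot (EReal.coe_ne_bot _)]
    exact le_top
  rw [← hf.coe_toReal hw, ← EReal.coe_add, EReal.coe_le_coe_iff, hmin.moreauR_eq hf]
  have hsw := (hf.mem_subdiff_iff (hmin.apply_ne_top hf)).1 hsub w hw
  have hsq : 0 ≤ 1 / (2 * γ) * ‖(w - y) + (x - u)‖ ^ 2 := by positivity
  rw [show w - u = (w - y) + (x - u) + (y - x) by abel, inner_add_right, inner_add_right,
    real_inner_smul_left, real_inner_smul_left, real_inner_smul_left, real_inner_self_eq_norm_sq,
    real_inner_comm] at hsw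
  rw [norm_add_sq_real] at hsq
  rw [real_inner_smul_left, ← norm_neg (u - x), neg_sub]
  linear_combination hsw + hsq

theorem tendsto_moreauR_of_tendsto_prox (hf : ProperFun f) (hfc : ConvexFun f)
    (hfl : LowerSemicontinuous f) (hγ : 0 < γ) {s y : ℕ → Euc p} {sstar ystar : Euc p}
    (hs : Tendsto s atTop (𝓝 sstar)) (hy : Tendsto y atTop (𝓝 ystar))
    (hprox : ∀ j, ProxObjMin f γ (s j) (y j)) :
    γ⁻¹ • (sstar - ystar) ∈ Subdiff f ystar ∧ Tendsto (fun j => moreauR f γ (s j)) atTop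
      (𝓝 ((f ystar).toReal + 1 / (2 * γ) * ‖ystar - sstar‖ ^ 2)) := by
  have hw : Tendsto (fun j => γ⁻¹ • (s j - y j)) atTop (𝓝 (γ⁻¹ • (sstar - ystar))) :=
    (hs.sub hy).const_smul _
  have hsub j := (hprox j).smul_sub_mem_subdiff hf hfc hγ
  have hmem := mem_subdiff_of_tendsto hfl hy hw hsub
  refine ⟨hmem, ?_⟩
  simp_rw [fun j => (hprox j).moreauR_eq hf]
  exact (tendsto_toReal_apply_of_mem_subdiff hf hfl hy hw hsub (hf.ne_top_of_mem_subdiff hmem)).add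
    (((hy.sub hs).norm.pow 2).const_mul _)

end Prox

section DCEnvelope

variable {g h : Euc p → EReal} {γ c : ℝ} {x s s' u v u' v' : Euc p}

theorem add_le_of_le_dcVal (hh : ProperFun h) (hc : (c : EReal) ≤ dcVal g h x) :
    h x + c ≤ g x := by
  unfold dcVal at hc
  split_ifs at hc with hg
  · rw [hg]
    exact le_top
  · rw [add_comm]
    exact (EReal.le_sub_iff_add_le (.inl (hh.1 x)) (.inr hg)).1 hc

theorem moreau_add_le_moreau (hh : ProperFun h) (hc : ∀ x, (c : EReal) ≤ dcVal g h x)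
    (x : Euc p) : moreau h γ x + c ≤ moreau g γ x :=
  le_iInf fun w => calc
    moreau h γ x + c ≤ h w + ((1/(2*γ) * ‖w - x‖^2 : ℝ) : EReal) + c := by
      gcongr
      exact iInf_le _ w
    _ = h w + c + ((1/(2*γ) * ‖w - x‖^2 : ℝ) : EReal) := add_right_comm _ _ _
    _ ≤ g w + ((1/(2*γ) * ‖w - x‖^2 : ℝ) : EReal) := by
      gcongr
      exact add_le_of_le_dcVal hh (hc w)

theorem le_dce (hg : ProperFun g) (hh : ProperFun h) (hc : ∀ x, (c : EReal) ≤ dcVal g h x)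
    (hv : ProxObjMin g γ x v) (hu : ProxObjMin h γ x u) : c ≤ dce g h γ x := by
  have := moreau_add_le_moreau (γ := γ) hh hc x
  rw [← hv.coe_moreauR hg, ← hu.coe_moreauR hh, ← EReal.coe_add, EReal.coe_le_coe_iff] at this
  unfold dce
  linarith

theorem dce_add_le (hg : ProperFun g) (hh : ProperFun h) (hhc : ConvexFun h) (hγ : 0 < γ)
    {lam : ℝ} (hs' : s' = s + lam • (v - u)) (hu : ProxObjMin h γ s u) (hv : ProxObjMin g γ s v)
    (hu' : ProxObjMin h γ s' u') (hv' : ProxObjMin g γ s' v') :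
    dce g h γ s' + lam * (2 - lam) / (2 * γ) * ‖v - u‖ ^ 2 ≤ dce g h γ s := by
  have hg' : moreauR g γ s' ≤ (g v).toReal + 1 / (2 * γ) * ‖v - s'‖ ^ 2 := by
    have : moreau g γ s' ≤ _ := iInf_le _ v
    rwa [← hv'.coe_moreauR hg, ← hg.coe_toReal (hv.apply_ne_top hg), ← EReal.coe_add,
      EReal.coe_le_coe_iff] at this
  have hh' := hu.moreauR_add_inner_le_moreau hh hγ (hu.smul_sub_mem_subdiff hh hhc hγ) s'
  rw [← hu'.coe_moreauR hh, EReal.coe_le_coe_iff] at hh'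
  have hgs := hv.moreauR_eq hg
  rw [show v - s' = (v - s) - lam • (v - u) by rw [hs']; abel, norm_sub_sq_real, norm_smul,
    inner_smul_right, Real.norm_eq_abs, mul_pow, sq_abs] at hg'
  rw [show s' - s = lam • (v - u) by rw [hs']; abel, show s - u = (v - u) - (v - s) by abel,
    real_inner_smul_left, inner_smul_right, inner_sub_left, real_inner_self_eq_norm_sq] at hh'
  unfold dce
  linear_combination hg' + hh' - hgs

theorem stationary_and_dcVal_eq_of_mapClusterPt (hg : ProperFun g) (hgc : ConvexFun g)
    (hgl : LowerSemicontinuous g) (hh : ProperFun h) (hhc : ConvexFun h)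
    (hhl : LowerSemicontinuous h) (hγ : 0 < γ) {s u v : ℕ → Euc p} {L : ℝ}
    (hu : ∀ k, ProxObjMin h γ (s k) (u k)) (hv : ∀ k, ProxObjMin g γ (s k) (v k))
    (hbdd : Bornology.IsBounded (Set.range s)) (hvu : Tendsto (fun k => v k - u k) atTop (𝓝 0))
    (hL : Tendsto (fun k => dce g h γ (s k)) atTop (𝓝 L)) {ustar : Euc p}
    (hustar : MapClusterPt ustar atTop u) :
    (Subdiff g ustar ∩ Subdiff h ustar).Nonempty ∧ dcVal g h ustar = L := by
  obtain ⟨ψ, hψ, huψ⟩ := hustar.tendsto_subseq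
  obtain ⟨sstar, -, ψ', hψ', hsσ⟩ :=
    tendsto_subseq_of_bounded hbdd fun j => Set.mem_range_self (ψ j)
  have hσ : Tendsto (ψ ∘ ψ') atTop atTop := hψ.tendsto_atTop.comp hψ'.tendsto_atTop
  have huσ : Tendsto (u ∘ ψ ∘ ψ') atTop (𝓝 ustar) := huψ.comp hψ'.tendsto_atTop
  have hvσ : Tendsto (v ∘ ψ ∘ ψ') atTop (𝓝 ustar) := by
    simpa [Function.comp_def] using (hvu.comp hσ).add huσ
  obtain ⟨hgsub, hglim⟩ := tendsto_moreauR_of_tendsto_prox hg hgc hgl hγ hsσ hvσ fun j => hv _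
  obtain ⟨hhsub, hhlim⟩ := tendsto_moreauR_of_tendsto_prox hh hhc hhl hγ hsσ huσ fun j => hu _
  have hgfin := hg.ne_top_of_mem_subdiff hgsub
  have hLeq : L = (g ustar).toReal - (h ustar).toReal := by
    linarith [tendsto_nhds_unique (hL.comp hσ) (hglim.sub hhlim)]
  refine ⟨⟨_, hgsub, hhsub⟩, ?_⟩
  rw [dcVal, if_neg hgfin, hLeq, EReal.coe_sub, hg.coe_toReal hgfin,
    hh.coe_toReal (hh.ne_top_of_mem_subdiff hhsub)]

end DCEnvelope

open Filter in
/-- the iterates `u^k = prox_{γh}(s^k)`, `v^k = prox_{γg}(s^k)`,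
`s^{k+1} = s^k + λ(v^k − u^k)` are such that `(u^k)` and `(v^k)` have the same cluster points;
if moreover `(s^k)` is bounded, `(φ_γ(s^k))` decreases to a finite limit `φ⋆`, every cluster
point `u⋆` of `(u^k)` is stationary for `φ = g − h`, and `φ(u⋆) = φ⋆`. -/
theorem statement14
    (g h : Euc p → EReal)
    (hg_proper : ProperFun g) (hg_convex : ConvexFun g) (hg_lsc : LowerSemicontinuous g)
    (hh_proper : ProperFun h) (hh_convex : ConvexFun h) (hh_lsc : LowerSemicontinuous h)
    (hlb : ∃ c : ℝ, ∀ x, (c : EReal) ≤ dcVal g h x)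
    (γ : ℝ) (hγ : 0 < γ) (lam : ℝ) (hlam0 : 0 < lam) (hlam2 : lam < 2)
    (s u v : ℕ → Euc p)
    (hu : ∀ k, IsProxOf h γ (s k) (u k)) (hv : ∀ k, IsProxOf g γ (s k) (v k))
    (hs : ∀ k, s (k+1) = s k + lam • (v k - u k)) :
    {x : Euc p | MapClusterPt x atTop u} = {x : Euc p | MapClusterPt x atTop v} ∧
      (Bornology.IsBounded (Set.range s) →
        ∃ φstar : ℝ,
          Antitone (fun k => dce g h γ (s k)) ∧
          Tendsto (fun k => dce g h γ (s k)) atTop (nhds φstar) ∧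
          ∀ ustar : Euc p, MapClusterPt ustar atTop u →
            (Subdiff g ustar ∩ Subdiff h ustar).Nonempty ∧
              dcVal g h ustar = (φstar : EReal)) := by
  obtain ⟨c, hc⟩ := hlb
  set D := fun k => dce g h γ (s k)
  have hβ : 0 < lam * (2 - lam) / (2 * γ) := by
    have h2lam := sub_pos.2 hlam2
    positivity
  have hdecr k : D (k + 1) + lam * (2 - lam) / (2 * γ) * ‖v k - u k‖ ^ 2 ≤ D k :=
    dce_add_le hg_proper hh_proper hh_convex hγ (hs k) (hu k).1 (hv k).1 (hu (k + 1)).1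
      (hv (k + 1)).1
  have hanti : Antitone D :=
    antitone_nat_of_succ_le fun k => (le_add_of_nonneg_right (by positivity)).trans (hdecr k)
  have hlim : Tendsto D atTop (𝓝 (⨅ k, D k)) := tendsto_atTop_ciInf hanti
    ⟨c, Set.forall_mem_range.2 fun k => le_dce hg_proper hh_proper hc (hv k).1 (hu k).1⟩
  have hvu := tendsto_nhds_zero_of_sufficient_decrease hβ hlim hdecr
  refine ⟨Set.ext fun x => ⟨fun hx => hx.of_tendsto_sub hvu, fun hx => hx.of_tendsto_sub ?_⟩,
    fun hbdd => ⟨_, hanti, hlim, fun ustar hustar => ?_⟩⟩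
  · simpa using hvu.neg
  exact stationary_and_dcVal_eq_of_mapClusterPt hg_proper hg_convex hg_lsc hh_proper hh_convex
    hh_lsc hγ (fun k => (hu k).1) (fun k => (hv k).1) hbdd hvu hlim hustar
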